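/- The condition ζ̂ < R₀·c_m, where ζ̂ = m(A(c_e) − A(c_m))/ϑ and c_m solves R₀ϑ c_m ρ(c_m²) = m, holds if and only if m > R₀·ϑ·c_l·ρ(c_l²), where c_l ∈ (0, c_e) is the unique root of ρ(c_l²)(A(c_e) − A(c_l)) = 1. -/

import Mathlib

open Set

/-- Bernoulli density as a function of `t = q²`. -/
noncomputable def rho (γ t : ℝ) : ℝ := (1 - (γ - 1) / 2 * t) ^ ((1 : ℝ) / (γ - 1))

/-- Critical (sonic) speed. -/
noncomputable def cstar (γ : ℝ) : ℝ := Real.sqrt (2 / (γ + 1))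

/-- `A(q) = ∫_{c_*}^q (ρ(s²) + 2s²ρ'(s²))/(s ρ²(s²)) ds`. -/
noncomputable def Afun (γ q : ℝ) : ℝ :=
  ∫ s in (cstar γ)..q,
    (rho γ (s ^ 2) + 2 * s ^ 2 * deriv (rho γ) (s ^ 2)) / (s * (rho γ (s ^ 2)) ^ 2)

/-!
Below the sonic speed the density `q ↦ ρ(q²)` is decreasing while the mass flux `q ρ(q²)` is
increasing, since its derivative `ρ(q²) + 2q²ρ'(q²)` is positive there; this derivative is also
the numerator of the integrand defining `A`, so `A` is increasing too. Hence
`q ↦ ρ(q²)(A(c_e) − A(q))` is strictly decreasing on `(0, c_e]`. Since `m = R₀ϑ c_m ρ(c_m²)`,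
the condition `ζ̂ < R₀ c_m` reads `ρ(c_m²)(A(c_e) − A(c_m)) < 1 = ρ(c_l²)(A(c_e) − A(c_l))`,
that is `c_l < c_m`, that is `R₀ϑ c_l ρ(c_l²) < R₀ϑ c_m ρ(c_m²) = m`.
-/

noncomputable def massFlux (γ q : ℝ) : ℝ := q * rho γ (q ^ 2)

noncomputable def AfunIntegrand (γ s : ℝ) : ℝ :=
  (rho γ (s ^ 2) + 2 * s ^ 2 * deriv (rho γ) (s ^ 2)) / (s * (rho γ (s ^ 2)) ^ 2)

section

variable {γ : ℝ}

lemma sq_le_of_le_cstar (hγ : 1 < γ) {s : ℝ} (hs₀ : 0 ≤ s) (hs : s ≤ cstar γ) :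
    s ^ 2 ≤ 2 / (γ + 1) := by
  calc s ^ 2 ≤ cstar γ ^ 2 := pow_le_pow_left₀ hs₀ hs 2
    _ = 2 / (γ + 1) := Real.sq_sqrt (by positivity)

lemma sq_lt_of_lt_cstar (hγ : 1 < γ) {s : ℝ} (hs₀ : 0 ≤ s) (hs : s < cstar γ) :
    s ^ 2 < 2 / (γ + 1) := by
  calc s ^ 2 < cstar γ ^ 2 := pow_lt_pow_left₀ hs hs₀ two_ne_zero
    _ = 2 / (γ + 1) := Real.sq_sqrt (by positivity)

lemma one_sub_mul_pos_of_le_two_div (hγ : 1 < γ) {t : ℝ} (ht : t ≤ 2 / (γ + 1)) :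
    0 < 1 - (γ - 1) / 2 * t := by
  have hγ₁ : 0 < γ + 1 := by linarith
  rw [le_div_iff₀ hγ₁] at ht
  nlinarith

lemma rho_pos {t : ℝ} (h : 0 < 1 - (γ - 1) / 2 * t) : 0 < rho γ t :=
  Real.rpow_pos_of_pos h _

lemma rho_lt_rho (hγ : 1 < γ) {t₁ t₂ : ℝ} (h : 0 < 1 - (γ - 1) / 2 * t₂) (ht : t₁ < t₂) :
    rho γ t₂ < rho γ t₁ := by
  refine Real.rpow_lt_rpow h.le ?_ (one_div_pos.2 (sub_pos.2 hγ))
  nlinarith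

lemma hasDerivAt_rho (hγ : 1 < γ) {t : ℝ} (h : 0 < 1 - (γ - 1) / 2 * t) :
    HasDerivAt (rho γ) (-(1 / 2) * (1 - (γ - 1) / 2 * t) ^ (1 / (γ - 1) - 1 : ℝ)) t := by
  have hbase : HasDerivAt (fun t : ℝ => 1 - (γ - 1) / 2 * t) (-((γ - 1) / 2)) t := by
    simpa using ((hasDerivAt_id t).const_mul ((γ - 1) / 2)).const_sub 1
  refine (hbase.rpow_const (p := 1 / (γ - 1)) (Or.inl h.ne')).congr_deriv ?_
  have : γ - 1 ≠ 0 := by linarith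
  field_simp

lemma continuousAt_deriv_rho (hγ : 1 < γ) {t : ℝ} (h : 0 < 1 - (γ - 1) / 2 * t) :
    ContinuousAt (deriv (rho γ)) t := by
  have hexplicit : ContinuousAt
      (fun t : ℝ => -(1 / 2) * (1 - (γ - 1) / 2 * t) ^ (1 / (γ - 1) - 1 : ℝ)) t :=
    (((continuous_const.sub (continuous_const.mul continuous_id)).continuousAt).rpow_const
      (Or.inl h.ne')).const_mul _
  refine hexplicit.congr ?_
  have hopen : IsOpen {t : ℝ | 0 < 1 - (γ - 1) / 2 * t} :=
    isOpen_lt continuous_const (by fun_prop)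
  filter_upwards [hopen.mem_nhds h] with u hu
  exact (hasDerivAt_rho hγ hu).deriv.symm

/-- Writing `B = 1 - (γ-1)t/2`, this is `B^{1/(γ-1) - 1} (1 - (γ+1)t/2)`. -/
lemma rho_add_two_mul_deriv_rho_pos (hγ : 1 < γ) {t : ℝ} (ht : t < 2 / (γ + 1)) :
    0 < rho γ t + 2 * t * deriv (rho γ) t := by
  have hB : 0 < 1 - (γ - 1) / 2 * t := one_sub_mul_pos_of_le_two_div hγ ht.le
  have hγ₁ : 0 < γ + 1 := by linarith
  rw [lt_div_iff₀ hγ₁] at ht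
  have hpow : 0 < (1 - (γ - 1) / 2 * t) ^ (1 / (γ - 1) - 1 : ℝ) := Real.rpow_pos_of_pos hB _
  have hrho : rho γ t =
      (1 - (γ - 1) / 2 * t) ^ (1 / (γ - 1) - 1 : ℝ) * (1 - (γ - 1) / 2 * t) := by
    rw [rho, ← Real.rpow_add_one hB.ne']
    ring_nf
  rw [(hasDerivAt_rho hγ hB).deriv, hrho]
  nlinarith

lemma hasDerivAt_massFlux (hγ : 1 < γ) {q : ℝ} (h : 0 < 1 - (γ - 1) / 2 * q ^ 2) :
    HasDerivAt (massFlux γ) (rho γ (q ^ 2) + 2 * q ^ 2 * deriv (rho γ) (q ^ 2)) q := by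
  have hsq : HasDerivAt (fun x : ℝ => x ^ 2) (2 * q) q := by simpa using hasDerivAt_pow 2 q
  have hrho := HasDerivAt.comp (h := fun x : ℝ => x ^ 2) q (hasDerivAt_rho hγ h) hsq
  rw [← (hasDerivAt_rho hγ h).deriv] at hrho
  refine ((hasDerivAt_id q).mul hrho).congr_deriv ?_
  simp only [id, Function.comp_apply]
  ring

lemma strictMonoOn_massFlux (hγ : 1 < γ) : StrictMonoOn (massFlux γ) (Icc 0 (cstar γ)) := by
  have hB : ∀ q ∈ Icc 0 (cstar γ), 0 < 1 - (γ - 1) / 2 * q ^ 2 := fun q hq =>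
    one_sub_mul_pos_of_le_two_div hγ (sq_le_of_le_cstar hγ hq.1 hq.2)
  refine strictMonoOn_of_deriv_pos (convex_Icc _ _) ?_ fun q hq => ?_
  · exact fun q hq => (hasDerivAt_massFlux hγ (hB q hq)).continuousAt.continuousWithinAt
  · rw [interior_Icc] at hq
    rw [(hasDerivAt_massFlux hγ (hB q (Ioo_subset_Icc_self hq))).deriv]
    exact rho_add_two_mul_deriv_rho_pos hγ (sq_lt_of_lt_cstar hγ hq.1.le hq.2)

lemma continuousOn_AfunIntegrand (hγ : 1 < γ) :
    ContinuousOn (AfunIntegrand γ) (Ioc 0 (cstar γ)) := by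
  intro s hs
  have hB : 0 < 1 - (γ - 1) / 2 * s ^ 2 :=
    one_sub_mul_pos_of_le_two_div hγ (sq_le_of_le_cstar hγ hs.1.le hs.2)
  have hrho : ContinuousAt (fun s => rho γ (s ^ 2)) s :=
    (hasDerivAt_rho hγ hB).continuousAt.comp (f := fun s : ℝ => s ^ 2)
      (continuous_pow 2).continuousAt
  have hderiv : ContinuousAt (fun s => deriv (rho γ) (s ^ 2)) s :=
    (continuousAt_deriv_rho hγ hB).comp (f := fun s : ℝ => s ^ 2)
      (continuous_pow 2).continuousAt
  refine ContinuousAt.continuousWithinAt ?_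
  exact ((hrho.add ((continuousAt_const.mul (continuous_pow 2).continuousAt).mul hderiv)).div
    (continuousAt_id.mul (hrho.pow 2)) (mul_pos hs.1 (pow_pos (rho_pos hB) 2)).ne')

lemma AfunIntegrand_pos (hγ : 1 < γ) {s : ℝ} (hs₀ : 0 < s) (hs : s < cstar γ) :
    0 < AfunIntegrand γ s := by
  have hB : 0 < 1 - (γ - 1) / 2 * s ^ 2 :=
    one_sub_mul_pos_of_le_two_div hγ (sq_le_of_le_cstar hγ hs₀.le hs.le)
  exact div_pos (rho_add_two_mul_deriv_rho_pos hγ (sq_lt_of_lt_cstar hγ hs₀.le hs))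
    (mul_pos hs₀ (pow_pos (rho_pos hB) 2))

lemma Afun_sub_Afun (hγ : 1 < γ) {u v : ℝ} (hu : 0 < u) (huv : u ≤ v) (hv : v ≤ cstar γ) :
    Afun γ v - Afun γ u = ∫ s in u..v, AfunIntegrand γ s := by
  have hint : ∀ w ∈ Icc u (cstar γ),
      IntervalIntegrable (AfunIntegrand γ) MeasureTheory.volume (cstar γ) w := by
    intro w hw
    refine ((continuousOn_AfunIntegrand hγ).mono ?_).intervalIntegrable
    rw [uIcc_of_ge hw.2]
    exact Icc_subset_Ioc_iff hw.2 |>.2 ⟨hu.trans_le hw.1, le_rfl⟩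
  exact intervalIntegral.integral_interval_sub_left (hint v ⟨huv, hv⟩)
    (hint u ⟨le_rfl, huv.trans hv⟩)

lemma strictMonoOn_Afun (hγ : 1 < γ) : StrictMonoOn (Afun γ) (Ioc 0 (cstar γ)) := by
  intro u hu v hv huv
  rw [← sub_pos, Afun_sub_Afun hγ hu.1 huv.le hv.2]
  refine intervalIntegral.intervalIntegral_pos_of_pos_on ?_ (fun s hs => ?_) huv
  · refine ((continuousOn_AfunIntegrand hγ).mono ?_).intervalIntegrable
    rw [uIcc_of_le huv.le]
    exact Icc_subset_Ioc_iff huv.le |>.2 ⟨hu.1, hv.2⟩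
  · exact AfunIntegrand_pos hγ (hu.1.trans hs.1) (hs.2.trans_le hv.2)

lemma strictAntiOn_rho_mul_Afun_sub (hγ : 1 < γ) {c_e : ℝ} (hce : c_e ≤ cstar γ) :
    StrictAntiOn (fun q => rho γ (q ^ 2) * (Afun γ c_e - Afun γ q)) (Ioc 0 c_e) := by
  intro a ha b hb hab
  have hmem : ∀ q ∈ Ioc 0 c_e, q ∈ Ioc 0 (cstar γ) := fun q hq => ⟨hq.1, hq.2.trans hce⟩
  have hB : ∀ q ∈ Ioc 0 c_e, 0 < 1 - (γ - 1) / 2 * q ^ 2 := fun q hq =>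
    one_sub_mul_pos_of_le_two_div hγ (sq_le_of_le_cstar hγ hq.1.le (hmem q hq).2)
  have hrho : rho γ (b ^ 2) < rho γ (a ^ 2) :=
    rho_lt_rho hγ (hB b hb) (pow_lt_pow_left₀ hab ha.1.le two_ne_zero)
  have hAb : 0 ≤ Afun γ c_e - Afun γ b :=
    sub_nonneg.2 ((strictMonoOn_Afun hγ).monotoneOn (hmem b hb) ⟨hb.1.trans_le hb.2, hce⟩ hb.2)
  have hAab : Afun γ c_e - Afun γ b < Afun γ c_e - Afun γ a :=
    sub_lt_sub_left ((strictMonoOn_Afun hγ) (hmem a ha) (hmem b hb) hab) _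
  calc rho γ (b ^ 2) * (Afun γ c_e - Afun γ b)
      ≤ rho γ (a ^ 2) * (Afun γ c_e - Afun γ b) := mul_le_mul_of_nonneg_right hrho.le hAb
    _ < rho γ (a ^ 2) * (Afun γ c_e - Afun γ a) :=
        mul_lt_mul_of_pos_left hAab (rho_pos (hB a ha))

end

theorem stmt_9_general (γ R₀ ϑ c_e m c_m c_l : ℝ) (hγ : 1 < γ) (hR₀ : 0 < R₀)
    (hϑ : ϑ ∈ Ioo (0 : ℝ) (Real.pi / 2))
    (hce : c_e ∈ Ioo (0 : ℝ) (cstar γ))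
    (hcm : c_m ∈ Ioo (0 : ℝ) c_e ∧ R₀ * ϑ * c_m * rho γ (c_m ^ 2) = m)
    (hcl : c_l ∈ Ioo (0 : ℝ) c_e ∧ rho γ (c_l ^ 2) * (Afun γ c_e - Afun γ c_l) = 1) :
    m * (Afun γ c_e - Afun γ c_m) / ϑ < R₀ * c_m ↔
      R₀ * ϑ * c_l * rho γ (c_l ^ 2) < m := by
  obtain ⟨⟨hcm₀, hcme⟩, rfl⟩ := hcm
  obtain ⟨⟨hcl₀, hcle⟩, hcl⟩ := hcl
  have hmem : ∀ q ∈ Ioo 0 c_e, q ∈ Icc 0 (cstar γ) := fun q hq =>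
    ⟨hq.1.le, hq.2.le.trans hce.2.le⟩
  calc R₀ * ϑ * c_m * rho γ (c_m ^ 2) * (Afun γ c_e - Afun γ c_m) / ϑ < R₀ * c_m
      ↔ rho γ (c_m ^ 2) * (Afun γ c_e - Afun γ c_m)
          < rho γ (c_l ^ 2) * (Afun γ c_e - Afun γ c_l) := by
        have hζ : R₀ * ϑ * c_m * rho γ (c_m ^ 2) * (Afun γ c_e - Afun γ c_m) / ϑ
            = R₀ * c_m * (rho γ (c_m ^ 2) * (Afun γ c_e - Afun γ c_m)) := by
          field_simp [hϑ.1.ne']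
        rw [hcl, hζ, mul_lt_iff_lt_one_right (mul_pos hR₀ hcm₀)]
    _ ↔ c_l < c_m :=
        (strictAntiOn_rho_mul_Afun_sub hγ hce.2.le).lt_iff_gt ⟨hcm₀, hcme.le⟩ ⟨hcl₀, hcle.le⟩
    _ ↔ massFlux γ c_l < massFlux γ c_m :=
        ((strictMonoOn_massFlux hγ).lt_iff_lt (hmem c_l ⟨hcl₀, hcle⟩)
          (hmem c_m ⟨hcm₀, hcme⟩)).symm
    _ ↔ R₀ * ϑ * c_l * rho γ (c_l ^ 2) < R₀ * ϑ * c_m * rho γ (c_m ^ 2) := by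
        simp only [massFlux, mul_assoc, mul_lt_mul_iff_right₀ hR₀, mul_lt_mul_iff_right₀ hϑ.1]

/-- `ζ̂ < R₀ c_m` holds if and only if `m > R₀ϑ c_l ρ(c_l²)`, where
`ζ̂ = m(A(c_e) − A(c_m))/ϑ`, `c_m` solves `R₀ϑ c_m ρ(c_m²) = m`, and
`c_l ∈ (0, c_e)` is the unique root of `ρ(c_l²)(A(c_e) − A(c_l)) = 1`. -/
theorem stmt_9 (γ R₀ ϑ c_e m c_m c_l : ℝ) (hγ : 1 < γ) (hR₀ : 0 < R₀)
    (hϑ : ϑ ∈ Ioo (0 : ℝ) (Real.pi / 2))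
    (hce : c_e ∈ Ioo (0 : ℝ) (cstar γ))
    (hm : 0 < m) (hm' : m < R₀ * ϑ * c_e * rho γ (c_e ^ 2))
    (hcm : c_m ∈ Ioo (0 : ℝ) c_e ∧ R₀ * ϑ * c_m * rho γ (c_m ^ 2) = m)
    (hcl : c_l ∈ Ioo (0 : ℝ) c_e ∧ rho γ (c_l ^ 2) * (Afun γ c_e - Afun γ c_l) = 1) :
    m * (Afun γ c_e - Afun γ c_m) / ϑ < R₀ * c_m ↔
      R₀ * ϑ * c_l * rho γ (c_l ^ 2) < m :=
  stmt_9_general γ R₀ ϑ c_e m c_m c_l hγ hR₀ hϑ hce hcm hcl
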